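/- arXiv:1306.5724 — 2 statements merged into one kernel-verified Lean document; each statement's English description precedes it below -/
import Mathlib

section
/- Let M be a Garside monoid, G a group, and ι : M → G an injective monoid homomorphism such that every element of G equals ι(a)⁻¹·ι(b) for some a, b ∈ M. Then the centre of G equals the set { ι(a)⁻¹·ι(b) : a, b ∈ Z(M) }, where Z(M) is the centre of the monoid M; that is, the centre of the group of fractions of M is the group of fractions of the centre of M. -/
/-- `a` left-divides `b`. -/
def LeftDvd {M : Type*} [Monoid M] (a b : M) : Prop := ∃ c, b = a * c

/-- `a` right-divides `b`. -/
def GRightDvd {M : Type*} [Monoid M] (a b : M) : Prop := ∃ c, b = c * a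

/-- `c` is a right lcm of `a` and `b` (least common upper bound for left-divisibility). -/
def IsRightLcm {M : Type*} [Monoid M] (a b c : M) : Prop :=
  LeftDvd a c ∧ LeftDvd b c ∧ ∀ d, LeftDvd a d → LeftDvd b d → LeftDvd c d

/-- `c` is a left lcm of `a` and `b` (least common upper bound for right-divisibility). -/
def IsLeftLcm {M : Type*} [Monoid M] (a b c : M) : Prop :=
  GRightDvd a c ∧ GRightDvd b c ∧ ∀ d, GRightDvd a d → GRightDvd b d → GRightDvd c d

/-- `Δ` is a Garside element: its left-divisors coincide with its right-divisors,
they form a finite set, and this set generates `M`. -/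
def IsGarsideElement {M : Type*} [Monoid M] (Δ : M) : Prop :=
  {d | LeftDvd d Δ} = {d | GRightDvd d Δ} ∧
  {d | LeftDvd d Δ}.Finite ∧
  Submonoid.closure {d | LeftDvd d Δ} = ⊤

/-- A Garside monoid: cancellative, conical, atomic, with right and left lcms,
admitting a Garside element. -/
structure IsGarsideMonoid (M : Type*) [Monoid M] : Prop where
  mul_left_cancel : ∀ a b c : M, a * b = a * c → b = c
  mul_right_cancel : ∀ a b c : M, b * a = c * a → b = c
  conical : ∀ a : M, IsUnit a → a = 1
  atomic : ∃ ν : M → ℕ, (∀ a : M, a ≠ 1 → 0 < ν a) ∧ ∀ a b : M, ν a + ν b ≤ ν (a * b)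
  right_lcm : ∀ a b : M, ∃ c, IsRightLcm a b c
  left_lcm : ∀ a b : M, ∃ c, IsLeftLcm a b c
  garside : ∃ Δ : M, IsGarsideElement Δ

/-- A Garside structure on a group `G`: a Garside monoid together with an embedding
into `G` realizing `G` as its group of (left) fractions. -/
structure GarsideStructure (G : Type u) [Group G] where
  M : Type u
  [instM : Monoid M]
  garside : IsGarsideMonoid M
  ι : M →* G
  inj : Function.Injective ι
  frac : ∀ g : G, ∃ a b : M, g = (ι a)⁻¹ * ι b

/-- A group is Garside if it is the group of fractions of some Garside monoid. -/
def IsGarsideGroup (G : Type u) [Group G] : Prop := Nonempty (GarsideStructure G)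

/-
Some power `Δ ^ k` of a Garside element is central: sending a divisor `d` of `Δ` to its
complement `d'` (with `Δ = d * d'`) permutes the finite set of divisors, and
`d * Δ = d * d' * d'' = Δ * d''`, so `Δ ^ k` commutes with the generating divisors once
`k` is the order of `d ↦ d''`. Every element of `M` then right-divides a power of `Δ ^ k`,
hence a central element `z = c * a`. A central fraction `g = ι a⁻¹ * ι b` thus equals
`ι z⁻¹ * ι (c * b)`, and `c * b` is central because `ι (c * b) = ι z * g` is.
-/

theorem IsGarsideMonoid.isRightCancelMul {M : Type*} [Monoid M] (hM : IsGarsideMonoid M) :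
    IsRightCancelMul M :=
  ⟨fun a b c h => hM.mul_right_cancel a b c h⟩

theorem mul_pow_eq_pow_mul_perm_pow {M : Type*} [Monoid M] {s : Set M} {x : M}
    (σ : Equiv.Perm s) (hσ : ∀ d : s, (d : M) * x = x * σ d) (n : ℕ) (d : s) :
    (d : M) * x ^ n = x ^ n * ((σ ^ n) d : M) := by
  induction n generalizing d with
  | zero => simp
  | succ n ih =>
    rw [pow_succ, ← mul_assoc, ih, mul_assoc, hσ, ← mul_assoc, ← pow_succ, pow_succ' σ,
      Equiv.Perm.mul_apply]

namespace IsGarsideElement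

variable {M : Type*} [Monoid M] {Δ : M}

theorem exists_perm_mul_eq_mul [IsRightCancelMul M] (hΔ : IsGarsideElement Δ) :
    ∃ σ : Equiv.Perm {d | LeftDvd d Δ}, ∀ d : {d | LeftDvd d Δ}, (d : M) * Δ = Δ * σ d := by
  have hcompl : ∀ d : {d | LeftDvd d Δ}, ∃ c : {d | LeftDvd d Δ}, Δ = d * c := by
    rintro ⟨d, c, hc⟩
    have hc' : c ∈ {d | LeftDvd d Δ} := by rw [hΔ.1]; exact ⟨d, hc⟩
    exact ⟨⟨c, hc'⟩, hc⟩
  choose D hD using hcompl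
  have hDinj : Function.Injective D := fun d e h =>
    Subtype.ext <| mul_right_cancel (show (d : M) * D d = e * D d by rw [← hD, h, ← hD])
  have : Finite {d | LeftDvd d Δ} := hΔ.2.1
  let τ := Equiv.ofBijective D (Finite.injective_iff_bijective.mp hDinj)
  refine ⟨τ * τ, fun d => ?_⟩
  calc (d : M) * Δ = d * (D d * D (D d)) := by rw [← hD]
    _ = Δ * D (D d) := by rw [← mul_assoc, ← hD]

theorem exists_pow_mem_center [IsRightCancelMul M] (hΔ : IsGarsideElement Δ) :
    ∃ k, 0 < k ∧ Δ ^ k ∈ Submonoid.center M := by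
  obtain ⟨σ, hσ⟩ := hΔ.exists_perm_mul_eq_mul
  have : Finite {d | LeftDvd d Δ} := hΔ.2.1
  refine ⟨orderOf σ, orderOf_pos σ, ?_⟩
  have hgen : {d | LeftDvd d Δ} ⊆ Submonoid.centralizer {Δ ^ orderOf σ} := by
    rintro d hd _ rfl
    simpa [pow_orderOf_eq_one] using (mul_pow_eq_pow_mul_perm_pow σ hσ (orderOf σ) ⟨d, hd⟩).symm
  have htop : Submonoid.centralizer {Δ ^ orderOf σ} = ⊤ :=
    top_le_iff.mp (hΔ.2.2 ▸ Submonoid.closure_le.mpr hgen)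
  exact Submonoid.centralizer_eq_top_iff_subset.mp htop rfl

theorem gRightDvd_pow (hΔ : IsGarsideElement Δ) {d : M} (hd : LeftDvd d Δ) {k : ℕ}
    (hk : 0 < k) : GRightDvd d (Δ ^ k) := by
  obtain ⟨c, hc⟩ : d ∈ {d | GRightDvd d Δ} := hΔ.1 ▸ hd
  rw [← Nat.sub_add_cancel hk, pow_succ, hc, ← mul_assoc]
  exact ⟨_, rfl⟩

end IsGarsideElement

theorem exists_gRightDvd_pow_of_closure_eq_top {M : Type*} [Monoid M] {s : Set M}
    (hs : Submonoid.closure s = ⊤) {z : M} (hz : z ∈ Submonoid.center M)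
    (hdvd : ∀ d ∈ s, GRightDvd d z) (a : M) : ∃ n, GRightDvd a (z ^ n) := by
  induction (hs ▸ Submonoid.mem_top a : a ∈ Submonoid.closure s) using
      Submonoid.closure_induction with
  | mem d hd => exact ⟨1, (pow_one z).symm ▸ hdvd d hd⟩
  | one => exact ⟨0, 1, by simp⟩
  | mul x y _ _ hx hy =>
    obtain ⟨m, u, hu⟩ := hx
    obtain ⟨n, v, hv⟩ := hy
    refine ⟨m + n, v * u, ?_⟩
    calc z ^ (m + n) = z ^ m * v * y := by rw [pow_add, hv, mul_assoc]
      _ = v * u * (x * y) := by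
        rw [← Submonoid.mem_center_iff.mp (pow_mem hz m) v, hu]; simp only [mul_assoc]

theorem IsGarsideMonoid.exists_mem_center_gRightDvd {M : Type*} [Monoid M]
    (hM : IsGarsideMonoid M) (a : M) : ∃ z ∈ Submonoid.center M, GRightDvd a z := by
  have := hM.isRightCancelMul
  obtain ⟨Δ, hΔ⟩ := hM.garside
  obtain ⟨k, hk, hcenter⟩ := hΔ.exists_pow_mem_center
  obtain ⟨n, hn⟩ := exists_gRightDvd_pow_of_closure_eq_top hΔ.2.2 hcenter
    (fun d hd => hΔ.gRightDvd_pow hd hk) a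
  exact ⟨_, Submonoid.pow_mem _ hcenter n, hn⟩

section GroupOfFractions

variable {M G : Type*} [Monoid M] [Group G] (ι : M →* G)

theorem map_mem_center_of_forall_eq_inv_mul (hfrac : ∀ g : G, ∃ a b : M, g = (ι a)⁻¹ * ι b)
    {z : M} (hz : z ∈ Submonoid.center M) : ι z ∈ Subgroup.center G := by
  have hcomm (x : M) : Commute (ι x) (ι z) := Commute.map (Submonoid.mem_center_iff.mp hz x) ι
  refine Subgroup.mem_center_iff.mpr fun g => ?_
  obtain ⟨a, b, rfl⟩ := hfrac g
  exact ((hcomm a).inv_left.mul_left (hcomm b)).eq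

theorem exists_mem_center_eq_inv_mul (hinj : Function.Injective ι)
    (hfrac : ∀ g : G, ∃ a b : M, g = (ι a)⁻¹ * ι b)
    (hdvd : ∀ a : M, ∃ z ∈ Submonoid.center M, GRightDvd a z) {g : G}
    (hg : g ∈ Subgroup.center G) :
    ∃ a ∈ Submonoid.center M, ∃ b ∈ Submonoid.center M, g = (ι a)⁻¹ * ι b := by
  obtain ⟨a, b, rfl⟩ := hfrac g
  obtain ⟨_, hz, c, rfl⟩ := hdvd a
  have hfrac_eq : ι (c * b) = ι (c * a) * ((ι a)⁻¹ * ι b) := by simp [mul_assoc]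
  have hcb : c * b ∈ Submonoid.center M := Submonoid.mem_center_iff.mpr fun x => hinj <| by
    rw [map_mul ι x, map_mul ι _ x, hfrac_eq]
    have hιz := map_mem_center_of_forall_eq_inv_mul ι hfrac hz
    exact Subgroup.mem_center_iff.mp (mul_mem hιz hg) _
  exact ⟨c * a, hz, c * b, hcb, by rw [hfrac_eq, inv_mul_cancel_left]⟩

end GroupOfFractions

theorem center_groupOfFractions {M : Type u} [Monoid M] (hM : IsGarsideMonoid M)
    (G : Type u) [Group G] (ι : M →* G) (hinj : Function.Injective ι)
    (hfrac : ∀ g : G, ∃ a b : M, g = (ι a)⁻¹ * ι b) :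
    (Subgroup.center G : Set G) =
      { g : G | ∃ a b : M, (∀ x : M, a * x = x * a) ∧ (∀ x : M, b * x = x * b) ∧
          g = (ι a)⁻¹ * ι b } := by
  have hcenter (a : M) : (∀ x : M, a * x = x * a) ↔ a ∈ Submonoid.center M := by
    rw [Submonoid.mem_center_iff]
    exact forall_congr' fun _ => eq_comm
  ext g
  constructor
  · intro hg
    obtain ⟨a, ha, b, hb, rfl⟩ :=
      exists_mem_center_eq_inv_mul ι hinj hfrac hM.exists_mem_center_gRightDvd hg
    exact ⟨a, b, (hcenter a).mpr ha, (hcenter b).mpr hb, rfl⟩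
  · rintro ⟨a, b, ha, hb, rfl⟩
    exact mul_mem (inv_mem (map_mem_center_of_forall_eq_inv_mul ι hfrac ((hcenter a).mp ha)))
      (map_mem_center_of_forall_eq_inv_mul ι hfrac ((hcenter b).mp hb))
end

section
/- The presented group ⟨x, y : x·y·x·y·x = y·y⟩ is isomorphic to the presented group ⟨y, z : y³ = z³⟩. -/
/-- The relator of the group `⟨x, y : x·y·x·y·x = y·y⟩`, with `false ↦ x` and `true ↦ y`. -/
def relKappa : Set (FreeGroup Bool) :=
  { FreeGroup.of false * FreeGroup.of true * FreeGroup.of false * FreeGroup.of true *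
      FreeGroup.of false * (FreeGroup.of true * FreeGroup.of true)⁻¹ }

/-- The relator of the group `⟨y, z : y³ = z³⟩`, with `false ↦ y` and `true ↦ z`. -/
def relCube : Set (FreeGroup Bool) :=
  { (FreeGroup.of false) ^ 3 * ((FreeGroup.of true) ^ 3)⁻¹ }

lemma presented_rel_one {α : Type*} {rels : Set (FreeGroup α)} {r : FreeGroup α} (hr : r ∈ rels) :
    PresentedGroup.mk rels r = 1 :=
  (QuotientGroup.eq_one_iff r).mpr (Subgroup.subset_normalClosure hr)

lemma relK_one :
    (PresentedGroup.of false * PresentedGroup.of true * PresentedGroup.of false *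
      PresentedGroup.of true * PresentedGroup.of false *
      (PresentedGroup.of true * PresentedGroup.of true)⁻¹ :
      PresentedGroup relKappa) = 1 := by
  have := presented_rel_one (rels := relKappa) rfl
  simpa [PresentedGroup.of] using this

lemma relC_one :
    ((PresentedGroup.of false : PresentedGroup relCube) ^ 3 *
      ((PresentedGroup.of true : PresentedGroup relCube) ^ 3)⁻¹) = 1 := by
  have := presented_rel_one (rels := relCube) rfl
  simpa [PresentedGroup.of] using this

/-- `x ↦ u v⁻¹`, `y ↦ v` (ψ : Kappa → Cube) -/
def fKC : Bool → PresentedGroup relCube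
  | true => PresentedGroup.of true
  | false => PresentedGroup.of false * (PresentedGroup.of true)⁻¹

/-- `u ↦ x y`, `v ↦ y` (φ : Cube → Kappa) -/
def fCK : Bool → PresentedGroup relKappa
  | true => PresentedGroup.of true
  | false => PresentedGroup.of false * PresentedGroup.of true

lemma hKC : ∀ r ∈ relKappa, FreeGroup.lift fKC r = 1 := by
  intro r hr
  rw [Set.eq_of_mem_singleton hr]
  simp only [map_mul, map_inv, FreeGroup.lift_apply_of, fKC]
  have : (PresentedGroup.of false : PresentedGroup relCube) * (PresentedGroup.of true)⁻¹ *
        PresentedGroup.of true * (PresentedGroup.of false * (PresentedGroup.of true)⁻¹) *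
        PresentedGroup.of true * (PresentedGroup.of false * (PresentedGroup.of true)⁻¹) *
        (PresentedGroup.of true * PresentedGroup.of true)⁻¹ =
      (PresentedGroup.of false : PresentedGroup relCube) ^ 3 *
        ((PresentedGroup.of true : PresentedGroup relCube) ^ 3)⁻¹ := by
    simp [pow_succ, mul_assoc, mul_inv_rev]
  rw [this, relC_one]

lemma hCK : ∀ r ∈ relCube, FreeGroup.lift fCK r = 1 := by
  intro r hr
  rw [Set.eq_of_mem_singleton hr]
  simp only [map_mul, map_inv, map_pow, FreeGroup.lift_apply_of, fCK]
  have : ((PresentedGroup.of false : PresentedGroup relKappa) * PresentedGroup.of true) ^ 3 *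
        ((PresentedGroup.of true : PresentedGroup relKappa) ^ 3)⁻¹ =
      PresentedGroup.of false * PresentedGroup.of true * PresentedGroup.of false *
        PresentedGroup.of true * PresentedGroup.of false *
        ((PresentedGroup.of true : PresentedGroup relKappa) * PresentedGroup.of true)⁻¹ := by
    simp [pow_succ, mul_assoc, mul_inv_rev]
  rw [this, relK_one]

def ψ : PresentedGroup relKappa →* PresentedGroup relCube := PresentedGroup.toGroup hKC
def φ : PresentedGroup relCube →* PresentedGroup relKappa := PresentedGroup.toGroup hCK

theorem kappa_group_iso_cube_group :
    Nonempty (PresentedGroup relKappa ≃* PresentedGroup relCube) := by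
  refine ⟨{ toFun := ψ, invFun := φ, left_inv := ?_, right_inv := ?_, map_mul' := map_mul ψ }⟩
  · have : φ.comp ψ = MonoidHom.id _ := by
      ext b
      cases b <;>
        simp [ψ, φ, fKC, fCK, PresentedGroup.toGroup.of, map_mul, map_inv, mul_assoc]
    intro g
    exact DFunLike.congr_fun this g
  · have : ψ.comp φ = MonoidHom.id _ := by
      ext b
      cases b <;>
        simp [ψ, φ, fKC, fCK, PresentedGroup.toGroup.of, map_mul, map_inv, mul_assoc]
    intro g
    exact DFunLike.congr_fun this g
end
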